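/- arXiv:1504.06523 — 2 statements merged into one kernel-verified Lean document; each statement's English description precedes it below -/
import Mathlib

section
/- Let α, β, a0, b0, a1, b1 > 0. Suppose γ, U, V are independent random variables with (1-γ)/(1+γ) ~ Beta(β,α), U ~ Beta(a0,b0), V ~ Beta(a1,b1). Then the triple (γ, Λ₀, Λ₁) := (γ, U/(1+γ), V/(1+γ)) has density π(γ,λ0,λ1) = (2^{α}/B(α,β)) · γ^{α-1}(1-γ)^{β-1}/(1+γ)^{α+β-a0-a1} · λ0^{a0-1}[1-(1+γ)λ0]^{b0-1}/B(a0,b0) · λ1^{a1-1}[1-(1+γ)λ1]^{b1-1}/B(a1,b1) with respect to Lebesgue measure on Ω = {(γ,λ0,λ1) : 0<γ<1, 0<λ0,λ1<1/(1+γ)}. In particular, taking α=β=a0=b0=a1=b1=1/2 gives Bernardo's reference prior for Dallal's model in the original parameterization (γ,λ0,λ1). -/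
open MeasureTheory ProbabilityTheory

/-- The Beta function `B(a,b) = Γ(a)Γ(b)/Γ(a+b)`. -/
noncomputable def betaFn (a b : ℝ) : ℝ := Real.Gamma a * Real.Gamma b / Real.Gamma (a + b)

/-- The law of a `Beta(a,b)` random variable: density `x^{a-1}(1-x)^{b-1}/B(a,b)`
on `(0,1)` with respect to Lebesgue measure. -/
noncomputable def betaLaw (a b : ℝ) : Measure ℝ :=
  volume.withDensity (fun x => ENNReal.ofReal
    (Set.indicator (Set.Ioo (0 : ℝ) 1) (fun t => t ^ (a - 1) * (1 - t) ^ (b - 1) / betaFn a b) x))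

/-!
The map `cayley t = (1 - t) / (1 + t)` is an involution of `(0, 1)` with
`|cayley' t| = 2 / (1 + t)²`, so `γ = cayley ((1 - γ) / (1 + γ))` has density
`2^α γ^(α-1) (1-γ)^(β-1) / ((1+γ)^(α+β) B(α,β))`. Given `γ`, the pair
`(Λ₀, Λ₁) = (U, V) / (1 + γ)` is an independent pair of rescaled Beta variables with density
`(1+γ)² p_U((1+γ)λ₀) p_V((1+γ)λ₁)`, and multiplying the two densities gives `π`.
-/

open Set
open scoped ENNReal

theorem map_volume_restrict_withDensity_of_invOn {f φ φ' : ℝ → ℝ} {I J : Set ℝ}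
    (hf : Measurable f) (hJ : MeasurableSet J) (hinv : InvOn φ f I J)
    (hfIJ : MapsTo f I J) (hφJI : MapsTo φ J I)
    (hφ' : ∀ y ∈ J, HasDerivWithinAt φ (φ' y) J y) (d : ℝ → ℝ≥0∞) :
    ((volume.restrict I).withDensity d).map f =
      (volume.restrict J).withDensity fun y => ENNReal.ofReal |φ' y| * d (φ y) := by
  ext s hs
  have himage : φ '' (s ∩ J) = f ⁻¹' s ∩ I := by
    ext x
    constructor
    · rintro ⟨y, ⟨hys, hyJ⟩, rfl⟩
      exact ⟨by rwa [mem_preimage, hinv.2 hyJ], hφJI hyJ⟩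
    · rintro ⟨hxs, hxI⟩
      exact ⟨f x, ⟨hxs, hfIJ hxI⟩, hinv.1 hxI⟩
  rw [Measure.map_apply hf hs, withDensity_apply _ (hf hs), withDensity_apply _ hs,
    Measure.restrict_restrict (hf hs), Measure.restrict_restrict hs, ← himage,
    lintegral_image_eq_lintegral_abs_deriv_mul (hs.inter hJ)
      (fun y hy => (hφ' y hy.2).mono inter_subset_right) (hinv.2.injOn.mono inter_subset_right)]

theorem map_volume_withDensity_div_const {c : ℝ} (hc : 0 < c) (d : ℝ → ℝ≥0∞) :
    (volume.withDensity d).map (· / c) =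
      volume.withDensity fun x => ENNReal.ofReal c * d (c * x) := by
  have hinv : InvOn (c * ·) (· / c) univ univ :=
    ⟨fun x _ => mul_div_cancel₀ x hc.ne', fun y _ => mul_div_cancel_left₀ y hc.ne'⟩
  simpa only [Measure.restrict_univ, abs_of_pos hc] using
    map_volume_restrict_withDensity_of_invOn (measurable_div_const c) MeasurableSet.univ hinv
      (mapsTo_univ _ _) (mapsTo_univ _ _)
      (fun y _ => ((hasDerivAt_id y).const_mul c).hasDerivWithinAt.congr_deriv (mul_one c)) d

theorem map_volume_withDensity_prod_div_const {c : ℝ} (hc : 0 < c) {d₁ d₂ : ℝ → ℝ≥0∞}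
    (hd₁ : Measurable d₁) (hd₂ : Measurable d₂) :
    ((volume.withDensity d₁).prod (volume.withDensity d₂)).map (fun z => (z.1 / c, z.2 / c)) =
      volume.withDensity fun z =>
        ENNReal.ofReal c * d₁ (c * z.1) * (ENNReal.ofReal c * d₂ (c * z.2)) := by
  change Measure.map (Prod.map (· / c) (· / c)) _ = _
  rw [← Measure.map_prod_map _ _ (measurable_div_const c) (measurable_div_const c),
    map_volume_withDensity_div_const hc, map_volume_withDensity_div_const hc,
    prod_withDensity (by fun_prop) (by fun_prop)]
  rfl

theorem map_prod_fiberwise_eq_withDensity {α β : Type*} [MeasurableSpace α] [MeasurableSpace β]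
    {μ : Measure α} {ν N : Measure β} [SFinite μ] [SFinite ν] [SFinite N]
    {f : α → ℝ≥0∞} {κ : α × β → ℝ≥0∞} {T : α → β → β}
    (hf : Measurable f) (hκ : Measurable κ) (hT : Measurable (Function.uncurry T))
    (hfiber : ∀ᵐ a ∂μ.withDensity f, N.map (T a) = ν.withDensity fun b => κ (a, b)) :
    ((μ.withDensity f).prod N).map (fun p => (p.1, T p.1 p.2)) =
      (μ.prod ν).withDensity fun p => f p.1 * κ p := by
  have hS : Measurable fun p : α × β => (p.1, T p.1 p.2) := measurable_fst.prodMk hT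
  ext s hs
  have hslice (a : α) : ∫⁻ b in Prod.mk a ⁻¹' s, κ (a, b) ∂ν = ∫⁻ b, s.indicator κ (a, b) ∂ν := by
    rw [← lintegral_indicator (measurable_prodMk_left hs)]
    rfl
  have hsκ : Measurable (s.indicator κ) := hκ.indicator hs
  calc ((μ.withDensity f).prod N).map (fun p => (p.1, T p.1 p.2)) s
      = ∫⁻ a, (N.map (T a)) (Prod.mk a ⁻¹' s) ∂μ.withDensity f := by
        rw [Measure.map_apply hS hs, Measure.prod_apply (hS hs)]
        refine lintegral_congr fun a => ?_
        rw [Measure.map_apply (show Measurable (T a) from hT.comp measurable_prodMk_left)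
          (measurable_prodMk_left hs)]
        rfl
    _ = ∫⁻ a, ∫⁻ b, s.indicator κ (a, b) ∂ν ∂μ.withDensity f := by
        refine lintegral_congr_ae (hfiber.mono fun a ha => ?_)
        dsimp only
        rw [ha, withDensity_apply _ (measurable_prodMk_left hs), hslice]
    _ = ∫⁻ a, ∫⁻ b, s.indicator (fun p => f p.1 * κ p) (a, b) ∂ν ∂μ := by
        rw [lintegral_withDensity_eq_lintegral_mul _ hf hsκ.lintegral_prod_right']
        refine lintegral_congr fun a => ?_
        rw [Pi.mul_apply, ← lintegral_const_mul _
          (show Measurable fun b => s.indicator κ (a, b) from hsκ.comp measurable_prodMk_left)]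
        refine lintegral_congr fun b => ?_
        by_cases h : (a, b) ∈ s <;> simp [h]
    _ = (μ.prod ν).withDensity (fun p => f p.1 * κ p) s := by
        rw [withDensity_apply _ hs, ← lintegral_indicator hs,
          lintegral_prod _ (show Measurable (s.indicator fun p : α × β => f p.1 * κ p) from
            ((hf.comp measurable_fst).mul hκ).indicator hs).aemeasurable]

theorem map_prodMk_prodMk_eq_prod_of_iIndepFun {Ω β : Type*} [MeasurableSpace Ω]
    [MeasurableSpace β] {μ : Measure Ω} [IsFiniteMeasure μ] {X Y Z : Ω → β}
    (hX : Measurable X) (hY : Measurable Y) (hZ : Measurable Z) (h : iIndepFun ![X, Y, Z] μ) :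
    μ.map (fun ω => (X ω, Y ω, Z ω)) = (μ.map X).prod ((μ.map Y).prod (μ.map Z)) := by
  have hYZ : IndepFun Y Z μ := by simpa using h.indepFun (show (1 : Fin 3) ≠ 2 by decide)
  have hXYZ : IndepFun X (fun ω => (Y ω, Z ω)) μ := by
    have hmeas : ∀ i, Measurable (![X, Y, Z] i) := fun i => by fin_cases i <;> assumption
    simpa using (h.indepFun_prodMk hmeas 1 2 0 (by decide) (by decide)).symm
  rw [hXYZ.map_prod_eq_prod_map_map hX.aemeasurable (hY.prodMk hZ).aemeasurable,
    hYZ.map_prod_eq_prod_map_map hY.aemeasurable hZ.aemeasurable]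

noncomputable def cayley (t : ℝ) : ℝ := (1 - t) / (1 + t)

theorem cayley_cayley {t : ℝ} (ht : 1 + t ≠ 0) : cayley (cayley t) = t := by
  unfold cayley
  field_simp
  ring

theorem one_sub_cayley {t : ℝ} (ht : 1 + t ≠ 0) : 1 - cayley t = 2 * t / (1 + t) := by
  unfold cayley
  field_simp
  ring

theorem measurable_cayley : Measurable cayley :=
  (measurable_const.sub measurable_id).div (measurable_const.add measurable_id)

theorem hasDerivAt_cayley {t : ℝ} (ht : 1 + t ≠ 0) :
    HasDerivAt cayley (-2 / (1 + t) ^ 2) t := by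
  have h : HasDerivAt cayley ((-1 * (1 + t) - (1 - t) * 1) / (1 + t) ^ 2) t :=
    ((hasDerivAt_id' t).const_sub 1).div ((hasDerivAt_id' t).const_add 1) ht
  convert h using 1
  ring

theorem mapsTo_cayley_Ioo : MapsTo cayley (Ioo 0 1) (Ioo 0 1) := fun t ⟨h0, h1⟩ =>
  ⟨div_pos (by linarith) (by linarith), (div_lt_one (by linarith)).2 (by linarith)⟩

theorem map_eq_map_map_cayley {Ω : Type*} [MeasurableSpace Ω] {μ : Measure Ω} {G : Ω → ℝ}
    (hG : Measurable G) (h0 : μ.map (fun ω => cayley (G ω)) {0} = 0) :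
    μ.map G = (μ.map fun ω => cayley (G ω)).map cayley := by
  have hcG : Measurable fun ω => cayley (G ω) := measurable_cayley.comp hG
  rw [Measure.map_apply hcG (measurableSet_singleton 0)] at h0
  have hne : ∀ᵐ ω ∂μ, 1 + G ω ≠ 0 := by
    refine measure_mono_null (fun ω hω => ?_) h0
    change cayley (G ω) = 0
    rw [cayley, not_not.1 hω, div_zero]
  rw [Measure.map_map measurable_cayley hcG]
  exact Measure.map_congr (hne.mono fun ω hω => (cayley_cayley hω).symm)

theorem betaFn_comm (a b : ℝ) : betaFn a b = betaFn b a := by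
  rw [betaFn, betaFn, mul_comm, add_comm]

theorem betaFn_pos {a b : ℝ} (ha : 0 < a) (hb : 0 < b) : 0 < betaFn a b :=
  div_pos (mul_pos (Real.Gamma_pos_of_pos ha) (Real.Gamma_pos_of_pos hb))
    (Real.Gamma_pos_of_pos (add_pos ha hb))

instance instSFiniteBetaLaw (a b : ℝ) : SFinite (betaLaw a b) := by
  unfold betaLaw
  infer_instance

noncomputable def betaDensity (a b t : ℝ) : ℝ := t ^ (a - 1) * (1 - t) ^ (b - 1) / betaFn a b

theorem betaDensity_nonneg {a b t : ℝ} (hB : 0 ≤ betaFn a b) (ht : t ∈ Ioo (0 : ℝ) 1) :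
    0 ≤ betaDensity a b t :=
  div_nonneg (mul_nonneg (Real.rpow_nonneg ht.1.le _) (Real.rpow_nonneg (by linarith [ht.2]) _)) hB

theorem betaLaw_eq_restrict (a b : ℝ) :
    betaLaw a b =
      (volume.restrict (Ioo 0 1)).withDensity fun t => ENNReal.ofReal (betaDensity a b t) := by
  rw [← withDensity_indicator measurableSet_Ioo, betaLaw]
  exact congrArg _ (funext fun t => (congrFun (indicator_comp_of_zero ENNReal.ofReal_zero) t).symm)

noncomputable def betaPdf (a b x : ℝ) : ℝ≥0∞ :=
  ENNReal.ofReal ((Ioo 0 1).indicator (betaDensity a b) x)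

@[fun_prop]
theorem measurable_betaPdf (a b : ℝ) : Measurable (betaPdf a b) :=
  ENNReal.measurable_ofReal.comp
    ((by unfold betaDensity; fun_prop : Measurable (betaDensity a b)).indicator measurableSet_Ioo)

noncomputable def cayleyBetaDensity (α β g : ℝ) : ℝ :=
  2 ^ α / betaFn α β * (g ^ (α - 1) * (1 - g) ^ (β - 1) / (1 + g) ^ (α + β))

theorem cayleyBetaDensity_nonneg {α β g : ℝ} (hB : 0 ≤ betaFn α β) (hg : g ∈ Ioo (0 : ℝ) 1) :
    0 ≤ cayleyBetaDensity α β g := by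
  obtain ⟨h0, h1⟩ := hg
  unfold cayleyBetaDensity
  have := Real.rpow_nonneg h0.le (α - 1)
  have := Real.rpow_nonneg (by linarith : (0 : ℝ) ≤ 1 - g) (β - 1)
  have := Real.rpow_nonneg (by linarith : (0 : ℝ) ≤ 1 + g) (α + β)
  positivity

theorem abs_deriv_cayley_mul_betaDensity {α β g : ℝ} (hg : g ∈ Ioo (0 : ℝ) 1) :
    |-2 / (1 + g) ^ 2| * betaDensity β α (cayley g) = cayleyBetaDensity α β g := by
  obtain ⟨h0, h1⟩ := hg
  have hp : 0 < 1 + g := by linarith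
  have hm : 0 < 1 - g := by linarith
  rw [betaDensity, one_sub_cayley hp.ne', cayley, cayleyBetaDensity, betaFn_comm β α,
    abs_div, abs_neg, abs_two, abs_of_pos (by positivity), Real.div_rpow hm.le hp.le,
    Real.div_rpow (by positivity) hp.le, Real.mul_rpow zero_le_two h0.le,
    Real.rpow_sub_one two_ne_zero α, Real.rpow_sub_one hp.ne' α, Real.rpow_sub_one hp.ne' β,
    Real.rpow_add hp]
  have := Real.rpow_pos_of_pos hp α
  have := Real.rpow_pos_of_pos hp β
  field_simp

theorem map_cayley_betaLaw (α β : ℝ) :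
    (betaLaw β α).map cayley =
      volume.withDensity
        ((Ioo 0 1).indicator fun g => ENNReal.ofReal (cayleyBetaDensity α β g)) := by
  have hinv : InvOn cayley cayley (Ioo 0 1) (Ioo 0 1) :=
    have h : LeftInvOn cayley cayley (Ioo 0 1) := fun t ht => cayley_cayley (by linarith [ht.1])
    ⟨h, h⟩
  rw [betaLaw_eq_restrict, withDensity_indicator measurableSet_Ioo,
    map_volume_restrict_withDensity_of_invOn measurable_cayley measurableSet_Ioo hinv
      mapsTo_cayley_Ioo mapsTo_cayley_Ioo
      fun t ht => (hasDerivAt_cayley (by linarith [ht.1])).hasDerivWithinAt]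
  refine withDensity_congr_ae ((ae_restrict_iff' measurableSet_Ioo).2
    (Filter.Eventually.of_forall fun g hg => ?_))
  dsimp only
  rw [← ENNReal.ofReal_mul (abs_nonneg _), abs_deriv_cayley_mul_betaDensity hg]

def dallalDomain : Set (ℝ × ℝ × ℝ) :=
  {q | 0 < q.1 ∧ q.1 < 1 ∧ 0 < q.2.1 ∧ q.2.1 < 1 / (1 + q.1) ∧ 0 < q.2.2 ∧ q.2.2 < 1 / (1 + q.1)}

noncomputable def dallalPrior (α β a0 b0 a1 b1 : ℝ) (q : ℝ × ℝ × ℝ) : ℝ :=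
  (2 : ℝ) ^ α / betaFn α β * (q.1 ^ (α - 1) * (1 - q.1) ^ (β - 1) /
    (1 + q.1) ^ (α + β - a0 - a1)) *
  (q.2.1 ^ (a0 - 1) * (1 - (1 + q.1) * q.2.1) ^ (b0 - 1) / betaFn a0 b0) *
  (q.2.2 ^ (a1 - 1) * (1 - (1 + q.1) * q.2.2) ^ (b1 - 1) / betaFn a1 b1)

theorem dallalPrior_eq_mul (α β a0 b0 a1 b1 : ℝ) {g x y : ℝ} (hg : 0 < 1 + g) (hx : 0 ≤ x)
    (hy : 0 ≤ y) :
    dallalPrior α β a0 b0 a1 b1 (g, x, y) = cayleyBetaDensity α β g *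
      ((1 + g) * betaDensity a0 b0 ((1 + g) * x) *
        ((1 + g) * betaDensity a1 b1 ((1 + g) * y))) := by
  simp only [dallalPrior, cayleyBetaDensity, betaDensity]
  rw [Real.mul_rpow hg.le hx, Real.mul_rpow hg.le hy, Real.rpow_sub_one hg.ne' a0,
    Real.rpow_sub_one hg.ne' a1, Real.rpow_sub hg _ a1, Real.rpow_sub hg _ a0]
  have := Real.rpow_pos_of_pos hg a0
  have := Real.rpow_pos_of_pos hg a1
  have := Real.rpow_pos_of_pos hg (α + β)
  field_simp

theorem ofReal_indicator_dallalPrior {α β a0 b0 a1 b1 : ℝ} (hB : 0 ≤ betaFn α β)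
    (hB0 : 0 ≤ betaFn a0 b0) (g x y : ℝ) :
    ENNReal.ofReal (dallalDomain.indicator (dallalPrior α β a0 b0 a1 b1) (g, x, y)) =
      (Ioo 0 1).indicator (fun g => ENNReal.ofReal (cayleyBetaDensity α β g)) g *
        (ENNReal.ofReal (1 + g) * betaPdf a0 b0 ((1 + g) * x) *
          (ENNReal.ofReal (1 + g) * betaPdf a1 b1 ((1 + g) * y))) := by
  by_cases hg : g ∈ Ioo (0 : ℝ) 1
  swap
  · have : (g, x, y) ∉ dallalDomain := fun h => hg ⟨h.1, h.2.1⟩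
    simp [indicator_of_notMem this, indicator_of_notMem hg]
  have hc : 0 < 1 + g := by linarith [hg.1]
  have hscale (z : ℝ) : (1 + g) * z ∈ Ioo (0 : ℝ) 1 ↔ z ∈ Ioo 0 (1 / (1 + g)) := by
    rw [mem_Ioo, mem_Ioo, lt_div_iff₀ hc, mul_comm z, mul_pos_iff_of_pos_left hc]
  by_cases hx : (1 + g) * x ∈ Ioo (0 : ℝ) 1
  swap
  · have : (g, x, y) ∉ dallalDomain := fun h => hx ((hscale x).2 ⟨h.2.2.1, h.2.2.2.1⟩)
    simp [betaPdf, indicator_of_notMem this, indicator_of_notMem hx]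
  by_cases hy : (1 + g) * y ∈ Ioo (0 : ℝ) 1
  swap
  · have : (g, x, y) ∉ dallalDomain := fun h => hy ((hscale y).2 ⟨h.2.2.2.2.1, h.2.2.2.2.2⟩)
    simp [betaPdf, indicator_of_notMem this, indicator_of_notMem hy]
  obtain ⟨hx0, hx1⟩ := (hscale x).1 hx
  obtain ⟨hy0, hy1⟩ := (hscale y).1 hy
  have hmem : (g, x, y) ∈ dallalDomain := ⟨hg.1, hg.2, hx0, hx1, hy0, hy1⟩
  rw [indicator_of_mem hmem, indicator_of_mem hg, betaPdf, betaPdf, indicator_of_mem hx,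
    indicator_of_mem hy, ← ENNReal.ofReal_mul hc.le, ← ENNReal.ofReal_mul hc.le,
    ← ENNReal.ofReal_mul (mul_nonneg hc.le (betaDensity_nonneg hB0 hx)),
    ← ENNReal.ofReal_mul (cayleyBetaDensity_nonneg hB hg),
    dallalPrior_eq_mul _ _ _ _ _ _ hc hx0.le hy0.le]

theorem map_dallal_eq_withDensity {α β a0 b0 a1 b1 : ℝ} (hB : 0 ≤ betaFn α β)
    (hB0 : 0 ≤ betaFn a0 b0) :
    (((betaLaw β α).map cayley).prod ((betaLaw a0 b0).prod (betaLaw a1 b1))).map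
        (fun p => (p.1, p.2.1 / (1 + p.1), p.2.2 / (1 + p.1))) =
      volume.withDensity fun p =>
        ENNReal.ofReal (dallalDomain.indicator (dallalPrior α β a0 b0 a1 b1) p) := by
  have hf : Measurable ((Ioo 0 1).indicator fun g => ENNReal.ofReal (cayleyBetaDensity α β g)) :=
    (by unfold cayleyBetaDensity; fun_prop : Measurable _).indicator measurableSet_Ioo
  rw [map_cayley_betaLaw, map_prod_fiberwise_eq_withDensity (ν := volume)
    (T := fun g z => (z.1 / (1 + g), z.2 / (1 + g)))
    (κ := fun p => ENNReal.ofReal (1 + p.1) * betaPdf a0 b0 ((1 + p.1) * p.2.1) *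
      (ENNReal.ofReal (1 + p.1) * betaPdf a1 b1 ((1 + p.1) * p.2.2)))
    hf (by fun_prop) (by fun_prop)]
  · exact congrArg _ (funext fun p => (ofReal_indicator_dallalPrior hB hB0 p.1 p.2.1 p.2.2).symm)
  · exact (ae_withDensity_iff hf).2 (Filter.Eventually.of_forall fun g hg =>
      map_volume_withDensity_prod_div_const (by linarith [(mem_of_indicator_ne_zero hg).1])
        (measurable_betaPdf _ _) (measurable_betaPdf _ _))

theorem dallal_general_prior_original_parameterization_general
    {Ω : Type*} [MeasurableSpace Ω] (μ : Measure Ω) [IsProbabilityMeasure μ]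
    (α β a0 b0 a1 b1 : ℝ)
    (hα : 0 < α) (hβ : 0 < β) (ha0 : 0 < a0) (hb0 : 0 < b0)
    (G U V : Ω → ℝ) (hG : Measurable G) (hU : Measurable U) (hV : Measurable V)
    (hindep : iIndepFun ![G, U, V] μ)
    (hGlaw : Measure.map (fun ω => (1 - G ω) / (1 + G ω)) μ = betaLaw β α)
    (hUlaw : Measure.map U μ = betaLaw a0 b0)
    (hVlaw : Measure.map V μ = betaLaw a1 b1) :
    Measure.map (fun ω => (G ω, U ω / (1 + G ω), V ω / (1 + G ω))) μ =
      volume.withDensity (fun p => ENNReal.ofReal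
        (Set.indicator
          {q : ℝ × ℝ × ℝ | 0 < q.1 ∧ q.1 < 1 ∧
            0 < q.2.1 ∧ q.2.1 < 1 / (1 + q.1) ∧ 0 < q.2.2 ∧ q.2.2 < 1 / (1 + q.1)}
          (fun q =>
            (2 : ℝ) ^ α / betaFn α β * (q.1 ^ (α - 1) * (1 - q.1) ^ (β - 1) /
              (1 + q.1) ^ (α + β - a0 - a1)) *
            (q.2.1 ^ (a0 - 1) * (1 - (1 + q.1) * q.2.1) ^ (b0 - 1) / betaFn a0 b0) *
            (q.2.2 ^ (a1 - 1) * (1 - (1 + q.1) * q.2.2) ^ (b1 - 1) / betaFn a1 b1)) p)) := by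
  have hcayleyG : μ.map (fun ω => cayley (G ω)) = betaLaw β α := hGlaw
  have hGcayley : μ.map G = (betaLaw β α).map cayley := by
    rw [map_eq_map_map_cayley hG (by rw [hcayleyG]; exact
      withDensity_absolutelyContinuous _ _ Real.volume_singleton), hcayleyG]
  have hjoint := map_prodMk_prodMk_eq_prod_of_iIndepFun hG hU hV hindep
  rw [hGcayley, hUlaw, hVlaw] at hjoint
  have hS : Measurable fun p : ℝ × ℝ × ℝ => (p.1, p.2.1 / (1 + p.1), p.2.2 / (1 + p.1)) := by
    fun_prop
  calc μ.map (fun ω => (G ω, U ω / (1 + G ω), V ω / (1 + G ω)))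
      = (μ.map fun ω => (G ω, U ω, V ω)).map
          (fun p => (p.1, p.2.1 / (1 + p.1), p.2.2 / (1 + p.1))) :=
        (Measure.map_map hS (hG.prodMk (hU.prodMk hV))).symm
    _ = _ := by
        rw [hjoint]
        exact map_dallal_eq_withDensity (betaFn_pos hα hβ).le (betaFn_pos ha0 hb0).le

/-- If `γ, U, V` are independent with `(1-γ)/(1+γ) ~ Beta(β,α)`, `U ~ Beta(a0,b0)`,
`V ~ Beta(a1,b1)`, then `(γ, U/(1+γ), V/(1+γ))` has density
`(2^α/B(α,β)) γ^{α-1}(1-γ)^{β-1}/(1+γ)^{α+β-a0-a1} ·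
λ0^{a0-1}[1-(1+γ)λ0]^{b0-1}/B(a0,b0) · λ1^{a1-1}[1-(1+γ)λ1]^{b1-1}/B(a1,b1)`
on `Ω = {0<γ<1, 0<λ0,λ1<1/(1+γ)}`. Taking all parameters `1/2` gives Bernardo's
reference prior for Dallal's model in the original parameterization. -/
theorem dallal_general_prior_original_parameterization
    {Ω : Type*} [MeasurableSpace Ω] (μ : Measure Ω) [IsProbabilityMeasure μ]
    (α β a0 b0 a1 b1 : ℝ)
    (hα : 0 < α) (hβ : 0 < β) (ha0 : 0 < a0) (hb0 : 0 < b0) (ha1 : 0 < a1) (hb1 : 0 < b1)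
    (G U V : Ω → ℝ) (hG : Measurable G) (hU : Measurable U) (hV : Measurable V)
    (hindep : iIndepFun ![G, U, V] μ)
    (hGlaw : Measure.map (fun ω => (1 - G ω) / (1 + G ω)) μ = betaLaw β α)
    (hUlaw : Measure.map U μ = betaLaw a0 b0)
    (hVlaw : Measure.map V μ = betaLaw a1 b1) :
    Measure.map (fun ω => (G ω, U ω / (1 + G ω), V ω / (1 + G ω))) μ =
      volume.withDensity (fun p => ENNReal.ofReal
        (Set.indicator
          {q : ℝ × ℝ × ℝ | 0 < q.1 ∧ q.1 < 1 ∧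
            0 < q.2.1 ∧ q.2.1 < 1 / (1 + q.1) ∧ 0 < q.2.2 ∧ q.2.2 < 1 / (1 + q.1)}
          (fun q =>
            (2 : ℝ) ^ α / betaFn α β * (q.1 ^ (α - 1) * (1 - q.1) ^ (β - 1) /
              (1 + q.1) ^ (α + β - a0 - a1)) *
            (q.2.1 ^ (a0 - 1) * (1 - (1 + q.1) * q.2.1) ^ (b0 - 1) / betaFn a0 b0) *
            (q.2.2 ^ (a1 - 1) * (1 - (1 + q.1) * q.2.2) ^ (b1 - 1) / betaFn a1 b1)) p)) :=
  dallal_general_prior_original_parameterization_general μ α β a0 b0 a1 b1 hα hβ ha0 hb0 G U V hG hU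
    hV hindep hGlaw hUlaw hVlaw
end

section
/- Let m0+, m1+, m2+ be nonnegative integers and a > 0. Then ∫₀¹∫₀¹ 2^{m1+} · γ^{m1+}(1-γ)^{m2+}/(1+γ)^{m1+ + m2+} · θ^{m1+ + m2+}(1-θ)^{m0+} · [2^{1/2}/B(1/2,1/2) · γ^{-1/2}(1-γ)^{-1/2}/(1+γ)] · [θ^{a-1}(1-θ)^{-1/2}/B(a,1/2)] dγ dθ = [B(m1+ + 1/2, m2+ + 1/2)/B(1/2,1/2)] · [B(m1+ + m2+ + a, m0+ + 1/2)/B(a,1/2)]. (This computes the marginal predictive distribution of the data under the null hypothesis H0: λ0 = λ1 for Dallal's model, up to the multinomial coefficients.) -/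
/-!
The integrand factors into a function of `γ` times a function of `θ`. The `θ`-factor is a Beta
integral. In the `γ`-factor, the likelihood and the prior combine into
`2^A γ^(A-1) (1-γ)^(B-1) (1+γ)^(-(A+B))` with `A = m1+ + 1/2`, `B = m2+ + 1/2`, and the
substitution `u = 2γ/(1+γ)`, a bijection of `(0,1)` with `du = 2 dγ/(1+γ)^2`, turns it into the
Beta kernel `u^(A-1) (1-u)^(B-1)`.
-/

open MeasureTheory

open Set

theorem integral_rpow_mul_one_sub_rpow_eq_betaFn {a b : ℝ} (ha : 0 < a) (hb : 0 < b) :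
    ∫ x in Ioo (0 : ℝ) 1, x ^ (a - 1) * (1 - x) ^ (b - 1) = betaFn a b := by
  have hcast : Complex.betaIntegral a b
      = ((∫ x in Ioo (0 : ℝ) 1, x ^ (a - 1) * (1 - x) ^ (b - 1) : ℝ) : ℂ) := by
    rw [Complex.betaIntegral, intervalIntegral.integral_of_le zero_le_one,
      integral_Ioc_eq_integral_Ioo, ← integral_complex_ofReal]
    refine setIntegral_congr_fun measurableSet_Ioo fun x ⟨hx0, hx1⟩ => ?_
    push_cast
    rw [Complex.ofReal_cpow hx0.le, Complex.ofReal_cpow (by linarith)]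
    push_cast
    ring
  have key := Complex.betaIntegral_eq_Gamma_mul_div a b (by simpa) (by simpa)
  rw [hcast, ← Complex.ofReal_add, Complex.Gamma_ofReal, Complex.Gamma_ofReal,
    Complex.Gamma_ofReal] at key
  exact_mod_cast key

lemma image_two_mul_div_one_add_Ioo :
    (fun x : ℝ => 2 * x / (1 + x)) '' Ioo 0 1 = Ioo 0 1 := by
  ext u
  constructor
  · rintro ⟨x, ⟨hx0, hx1⟩, rfl⟩
    exact ⟨by positivity, (div_lt_one (by linarith)).2 (by linarith)⟩
  · rintro ⟨hu0, hu1⟩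
    refine ⟨u / (2 - u), ⟨div_pos hu0 (by linarith), (div_lt_one (by linarith)).2 (by linarith)⟩,
      ?_⟩
    have : (2 : ℝ) - u ≠ 0 := by linarith
    field_simp
    ring

lemma injOn_two_mul_div_one_add : InjOn (fun x : ℝ => 2 * x / (1 + x)) (Ioo 0 1) := by
  intro x hx y hy hxy
  have : (1 : ℝ) + x ≠ 0 := by linarith [hx.1]
  have : (1 : ℝ) + y ≠ 0 := by linarith [hy.1]
  field_simp at hxy
  linarith

lemma hasDerivAt_two_mul_div_one_add {x : ℝ} (hx : 1 + x ≠ 0) :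
    HasDerivAt (fun y : ℝ => 2 * y / (1 + y)) (2 / (1 + x) ^ 2) x := by
  have h := ((hasDerivAt_id' x).const_mul (2 : ℝ)).fun_div ((hasDerivAt_id' x).const_add 1) hx
  exact h.congr_deriv (by ring)

theorem integral_Ioo_comp_two_mul_div_one_add {E : Type*} [NormedAddCommGroup E]
    [NormedSpace ℝ E] (f : ℝ → E) :
    ∫ u in Ioo (0 : ℝ) 1, f u = ∫ x in Ioo (0 : ℝ) 1, (2 / (1 + x) ^ 2) • f (2 * x / (1 + x)) := by
  have hsubst := integral_image_eq_integral_abs_deriv_smul measurableSet_Ioo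
    (fun x hx => (hasDerivAt_two_mul_div_one_add (by linarith [hx.1])).hasDerivWithinAt)
    injOn_two_mul_div_one_add f
  rw [image_two_mul_div_one_add_Ioo] at hsubst
  rw [hsubst]
  refine setIntegral_congr_fun measurableSet_Ioo fun x hx => ?_
  rw [abs_of_pos (by have := hx.1; positivity : (0 : ℝ) < 2 / (1 + x) ^ 2)]

lemma beta_kernel_two_mul_div_one_add {x : ℝ} (hx0 : 0 < x) (hx1 : x < 1) (a b : ℝ) :
    2 / (1 + x) ^ 2 * ((2 * x / (1 + x)) ^ (a - 1) * (1 - 2 * x / (1 + x)) ^ (b - 1)) =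
      2 ^ a * (x ^ (a - 1) * (1 - x) ^ (b - 1) * (1 + x) ^ (-(a + b))) := by
  have h1x : (0 : ℝ) < 1 + x := by linarith
  have hsub : 1 - 2 * x / (1 + x) = (1 - x) / (1 + x) := by field_simp; ring
  have hpow : (1 + x) ^ (-(a + b)) = ((1 + x) ^ (a - 1) * (1 + x) ^ (b - 1) * (1 + x) ^ 2)⁻¹ := by
    rw [← Real.rpow_natCast, ← Real.rpow_add h1x, ← Real.rpow_add h1x, ← Real.rpow_neg h1x.le]
    ring_nf
  have htwo : (2 : ℝ) ^ a = 2 * 2 ^ (a - 1) := by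
    rw [Real.rpow_sub_one two_ne_zero]; ring
  rw [hsub, Real.div_rpow (by linarith) h1x.le, Real.div_rpow (by linarith) h1x.le,
    Real.mul_rpow zero_le_two hx0.le, hpow, htwo]
  have : (1 + x) ^ (a - 1) ≠ 0 := (Real.rpow_pos_of_pos h1x _).ne'
  have : (1 + x) ^ (b - 1) ≠ 0 := (Real.rpow_pos_of_pos h1x _).ne'
  field_simp

theorem two_rpow_mul_integral_rpow_mul_one_sub_rpow_mul_one_add_rpow {a b : ℝ} (ha : 0 < a)
    (hb : 0 < b) :
    2 ^ a * ∫ x in Ioo (0 : ℝ) 1, x ^ (a - 1) * (1 - x) ^ (b - 1) * (1 + x) ^ (-(a + b)) =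
      betaFn a b := by
  rw [← integral_rpow_mul_one_sub_rpow_eq_betaFn ha hb,
    integral_Ioo_comp_two_mul_div_one_add fun u => u ^ (a - 1) * (1 - u) ^ (b - 1),
    ← integral_const_mul]
  exact setIntegral_congr_fun measurableSet_Ioo fun x ⟨hx0, hx1⟩ =>
    (beta_kernel_two_mul_div_one_add hx0 hx1 a b).symm

theorem integral_integral_mul_mul_mul {α β 𝕜 : Type*} [MeasurableSpace α] [MeasurableSpace β]
    [RCLike 𝕜] (μ : Measure α) (ν : Measure β) (f h : α → 𝕜) (g k : β → 𝕜) :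
    ∫ x, ∫ y, f x * g y * (h x * k y) ∂ν ∂μ = (∫ x, f x * h x ∂μ) * ∫ y, g y * k y ∂ν := by
  simp_rw [mul_mul_mul_comm (f _) (g _), integral_const_mul, integral_mul_const]

theorem integral_dallal_gamma_factor (m1 m2 : ℕ) :
    ∫ γ in Ioo (0 : ℝ) 1,
        (2 : ℝ) ^ m1 * (γ ^ m1 * (1 - γ) ^ m2 / (1 + γ) ^ (m1 + m2)) *
          ((2 : ℝ) ^ ((1 : ℝ) / 2) / betaFn (1 / 2) (1 / 2) *
            (γ ^ (-(1 : ℝ) / 2) * (1 - γ) ^ (-(1 : ℝ) / 2) / (1 + γ))) =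
      betaFn ((m1 : ℝ) + 1 / 2) ((m2 : ℝ) + 1 / 2) / betaFn (1 / 2) (1 / 2) := by
  have hpoint : ∀ γ ∈ Ioo (0 : ℝ) 1,
      (2 : ℝ) ^ m1 * (γ ^ m1 * (1 - γ) ^ m2 / (1 + γ) ^ (m1 + m2)) *
          ((2 : ℝ) ^ ((1 : ℝ) / 2) / betaFn (1 / 2) (1 / 2) *
            (γ ^ (-(1 : ℝ) / 2) * (1 - γ) ^ (-(1 : ℝ) / 2) / (1 + γ))) =
        2 ^ ((m1 : ℝ) + 1 / 2) / betaFn (1 / 2) (1 / 2) *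
          (γ ^ ((m1 : ℝ) + 1 / 2 - 1) * (1 - γ) ^ ((m2 : ℝ) + 1 / 2 - 1) *
            (1 + γ) ^ (-((m1 : ℝ) + 1 / 2 + ((m2 : ℝ) + 1 / 2)))) := by
    rintro γ ⟨hγ0, hγ1⟩
    have h1γ : (0 : ℝ) < 1 + γ := by linarith
    have hexp : (m1 : ℝ) + 1 / 2 + ((m2 : ℝ) + 1 / 2) = ((m1 + m2 : ℕ) : ℝ) + 1 := by
      push_cast; ring
    rw [add_comm (m1 : ℝ), Real.rpow_add_natCast two_ne_zero,
      show (1 / 2 + m1 : ℝ) - 1 = -1 / 2 + m1 by ring, Real.rpow_add_natCast hγ0.ne',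
      show (m2 + 1 / 2 : ℝ) - 1 = -1 / 2 + m2 by ring, Real.rpow_add_natCast (by linarith),
      add_comm (1 / 2 : ℝ), hexp, Real.rpow_neg h1γ.le, Real.rpow_add_one h1γ.ne',
      Real.rpow_natCast]
    field_simp
  rw [setIntegral_congr_fun measurableSet_Ioo hpoint, integral_const_mul, div_mul_eq_mul_div,
    two_rpow_mul_integral_rpow_mul_one_sub_rpow_mul_one_add_rpow (by positivity) (by positivity)]

theorem integral_dallal_theta_factor (m m0 : ℕ) {a : ℝ} (ha : 0 < a) :
    ∫ θ in Ioo (0 : ℝ) 1,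
        θ ^ m * (1 - θ) ^ m0 * (θ ^ (a - 1) * (1 - θ) ^ (-(1 : ℝ) / 2) / betaFn a (1 / 2)) =
      betaFn ((m : ℝ) + a) ((m0 : ℝ) + 1 / 2) / betaFn a (1 / 2) := by
  rw [← integral_rpow_mul_one_sub_rpow_eq_betaFn (a := m + a) (b := m0 + 1 / 2) (by positivity)
    (by positivity), ← integral_div]
  refine setIntegral_congr_fun measurableSet_Ioo fun θ ⟨hθ0, hθ1⟩ => ?_
  rw [show (m : ℝ) + a - 1 = a - 1 + m by ring, Real.rpow_add_natCast hθ0.ne',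
    show (m0 : ℝ) + 1 / 2 - 1 = -1 / 2 + m0 by ring, Real.rpow_add_natCast (by linarith)]
  ring

/-- The marginal predictive distribution of the data under the null hypothesis
`H₀ : λ0 = λ1` for Dallal's model (up to multinomial coefficients): integrating
the likelihood in the `(γ,θ)` parameterization against the prior
`(2^{1/2}/B(1/2,1/2))·γ^{-1/2}(1-γ)^{-1/2}/(1+γ) · θ^{a-1}(1-θ)^{-1/2}/B(a,1/2)`
over `(0,1)²` yields
`[B(m1+ + 1/2, m2+ + 1/2)/B(1/2,1/2)]·[B(m1+ + m2+ + a, m0+ + 1/2)/B(a,1/2)]`. -/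
theorem dallal_marginal_predictive_H0
    (m0p m1p m2p : ℕ) (a : ℝ) (ha : 0 < a) :
    ∫ γ in Set.Ioo (0 : ℝ) 1, ∫ θ in Set.Ioo (0 : ℝ) 1,
        (2 : ℝ) ^ m1p * (γ ^ m1p * (1 - γ) ^ m2p / (1 + γ) ^ (m1p + m2p)) *
          (θ ^ (m1p + m2p) * (1 - θ) ^ m0p) *
        ((2 : ℝ) ^ ((1 : ℝ) / 2) / betaFn (1 / 2) (1 / 2) *
            (γ ^ (-(1 : ℝ) / 2) * (1 - γ) ^ (-(1 : ℝ) / 2) / (1 + γ)) *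
          (θ ^ (a - 1) * (1 - θ) ^ (-(1 : ℝ) / 2) / betaFn a (1 / 2))) =
      betaFn ((m1p : ℝ) + 1 / 2) ((m2p : ℝ) + 1 / 2) / betaFn (1 / 2) (1 / 2) *
        (betaFn ((m1p : ℝ) + m2p + a) ((m0p : ℝ) + 1 / 2) / betaFn a (1 / 2)) := by
  rw [integral_integral_mul_mul_mul, integral_dallal_gamma_factor,
    integral_dallal_theta_factor _ _ ha]
  push_cast
  rfl
end
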